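/- arXiv:2203.07469 — 2 statements merged into one kernel-verified Lean document; each statement's English description precedes it below -/
import Mathlib

section
/- Let f : Δ_n → ℝ be permutation-invariant and convex, and define F : Dens(n) → ℝ by F(ρ) = f(λ(ρ)). Then for any λ ∈ Δ_n, any d ∈ ℝⁿ, and any n×n unitary matrix U: d is a subgradient of f at λ relative to Δ_n (i.e., f(λ') ≥ f(λ) + ⟨d, λ' − λ⟩ for all λ' ∈ Δ_n) if and only if U Diag(d) U* is a subgradient of F at U Diag(λ) U* relative to Dens(n) (i.e., F(τ) ≥ F(U Diag(λ) U*) + ⟨U Diag(d) U*, τ − U Diag(λ) U*⟩ for all τ ∈ Dens(n)). -/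
open Matrix BigOperators ComplexOrder

noncomputable section

/-- The space of `n × n` complex matrices. -/
abbrev Mat (n : ℕ) := Matrix (Fin n) (Fin n) ℂ

/-- The set of density matrices on ℂⁿ: positive semidefinite with trace 1. -/
def Dens (n : ℕ) : Set (Mat n) := {ρ | ρ.PosSemidef ∧ ρ.trace = 1}

/-- Real inner product on (Hermitian) matrices: ⟨A,B⟩ = Tr(AB) (real part). -/
def hip {n : ℕ} (A B : Mat n) : ℝ := ((A * B).trace).re

/-- A POVM with finite outcome set `Y`. -/
def IsPOVM {n : ℕ} {Y : Type*} [Fintype Y] (μ : Y → Mat n) : Prop :=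
  (∀ y, (μ y).PosSemidef) ∧ ∑ y, μ y = 1

/-- A projection-valued measurement. -/
def IsPVM {n : ℕ} {Y : Type*} [Fintype Y] (μ : Y → Mat n) : Prop :=
  IsPOVM μ ∧ (∀ y, (μ y).IsHermitian ∧ μ y * μ y = μ y) ∧
    ∀ y y', y ≠ y' → μ y * μ y' = 0

/-- Expected score of a quantum score with report type `R`. -/
def expScoreR {n : ℕ} {R : Type*} {Y : Type*} [Fintype Y]
    (s : R → Y → ℝ) (μ : R → Y → Mat n) (r : R) (ρ : Mat n) : ℝ :=
  ∑ y, hip (μ r y) ρ * s r y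

/-- Truthfulness of a quantum score. -/
def Truthful {n : ℕ} {Y : Type*} [Fintype Y]
    (s : Mat n → Y → ℝ) (μ : Mat n → Y → Mat n) : Prop :=
  ∀ ρ ∈ Dens n, ∀ ρ' ∈ Dens n, expScoreR s μ ρ' ρ ≤ expScoreR s μ ρ ρ

/-- Strict truthfulness of a quantum score. -/
def StrictlyTruthful {n : ℕ} {Y : Type*} [Fintype Y]
    (s : Mat n → Y → ℝ) (μ : Mat n → Y → Mat n) : Prop :=
  Truthful s μ ∧ ∀ ρ ∈ Dens n, ∀ ρ' ∈ Dens n,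
    expScoreR s μ ρ' ρ = expScoreR s μ ρ ρ → ρ' = ρ

/-- `d` is a (Hermitian-matrix) subgradient of `F` at `ρ` relative to `Dens n`. -/
def IsQSubgrad {n : ℕ} (F : Mat n → ℝ) (ρ d : Mat n) : Prop :=
  ∀ τ ∈ Dens n, F ρ + hip d (τ - ρ) ≤ F τ

/-- `d` is a subgradient of `f` at `p` relative to `P ⊆ ℝ^Y`. -/
def IsCSubgrad {Y : Type*} [Fintype Y] (P : Set (Y → ℝ)) (f : (Y → ℝ) → ℝ)
    (p d : Y → ℝ) : Prop :=
  ∀ q ∈ P, f p + ∑ y, d y * (q y - p y) ≤ f q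

/-- A POVM is tomographically complete if the real span of its elements is
the set of Hermitian matrices. -/
def TomoComplete {n : ℕ} {Y : Type*} [Fintype Y] (μ : Y → Mat n) : Prop :=
  ∀ X : Mat n, X.IsHermitian ↔ X ∈ Submodule.span ℝ (Set.range μ)

/-- The eigenvalues of a Hermitian matrix, in non-increasing order
(junk value `0` on non-Hermitian matrices). -/
def eigs {n : ℕ} (ρ : Mat n) : Fin n → ℝ :=
  if h : ρ.IsHermitian then
    fun i => (h.eigenvalues ∘ (Tuple.sort h.eigenvalues)) i.rev
  else 0

/-- The outer product `v v*`. -/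
def outer {n : ℕ} (v : Fin n → ℂ) : Mat n := Matrix.vecMulVec v (star v)

/-- A family of orthonormal vectors in ℂⁿ. -/
def ONFam {n k : ℕ} (x : Fin k → Fin n → ℂ) : Prop :=
  ∀ i j, ∑ m, (starRingEnd ℂ) (x i m) * x j m = if i = j then 1 else 0

/-- `x` is a spectral decomposition of `ρ` (with eigenvalues in non-increasing
order `eigs ρ`). -/
def IsSpecDecomp {n : ℕ} (ρ : Mat n) (x : Fin n → Fin n → ℂ) : Prop :=
  ONFam x ∧ ρ = ∑ y, (eigs ρ y : ℂ) • outer (x y)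

/-- Expected classical score `ŝ(q; p)`. -/
def cExp {n : ℕ} (s : (Fin n → ℝ) → Fin n → ℝ) (q p : Fin n → ℝ) : ℝ :=
  ∑ y, p y * s q y

/-- Properness of a classical scoring rule. -/
def Proper {n : ℕ} (s : (Fin n → ℝ) → Fin n → ℝ) : Prop :=
  ∀ p ∈ stdSimplex ℝ (Fin n), ∀ q ∈ stdSimplex ℝ (Fin n), cExp s q p ≤ cExp s p p

/-- Strict properness of a classical scoring rule. -/
def StrictlyProper {n : ℕ} (s : (Fin n → ℝ) → Fin n → ℝ) : Prop :=
  Proper s ∧ ∀ p ∈ stdSimplex ℝ (Fin n), ∀ q ∈ stdSimplex ℝ (Fin n),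
    cExp s q p = cExp s p p → q = p

/-- Permutation invariance of a classical scoring rule: `ŝ(p, y) = ŝ(πp, π y)`
where `(πp)_y = p_{π y}`. -/
def PermInv {n : ℕ} (s : (Fin n → ℝ) → Fin n → ℝ) : Prop :=
  ∀ (π : Equiv.Perm (Fin n)) (p : Fin n → ℝ) (y : Fin n), s p y = s (p ∘ π) (π y)

/-- Expected spectral score `S[ŝ](ρ'; ρ)` computed using the spectral
decomposition `x` of the report `ρ'`. -/
def specExp {n : ℕ} (s : (Fin n → ℝ) → Fin n → ℝ) (x : Fin n → Fin n → ℂ)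
    (ρ' ρ : Mat n) : ℝ :=
  ∑ y, hip (outer (x y)) ρ * s (eigs ρ') y

/-- Truthfulness of the spectral score `S[ŝ]`. -/
def SpecTruthful {n : ℕ} (s : (Fin n → ℝ) → Fin n → ℝ) : Prop :=
  ∀ ρ ∈ Dens n, ∀ ρ' ∈ Dens n, ∀ x z, IsSpecDecomp ρ' x → IsSpecDecomp ρ z →
    specExp s x ρ' ρ ≤ specExp s z ρ ρ

/-- Strict truthfulness of the spectral score `S[ŝ]`. -/
def SpecStrictlyTruthful {n : ℕ} (s : (Fin n → ℝ) → Fin n → ℝ) : Prop :=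
  SpecTruthful s ∧ ∀ ρ ∈ Dens n, ∀ ρ' ∈ Dens n, ∀ x z,
    IsSpecDecomp ρ' x → IsSpecDecomp ρ z →
    specExp s x ρ' ρ = specExp s z ρ ρ → ρ' = ρ

/-- Elicitability of a property of density matrices by a quantum score. -/
def ElicitableProp {n : ℕ} {R : Type*} (Γ : Mat n → R) : Prop :=
  ∃ (m : ℕ) (s : R → Fin m → ℝ) (μ : R → Fin m → Mat n),
    (∀ r, IsPOVM (μ r)) ∧
    ∀ ρ ∈ Dens n, ∀ r, (∀ r', expScoreR s μ r' ρ ≤ expScoreR s μ r ρ) ↔ r = Γ ρ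

/-- Identifiability of an ℝᵏ-valued property of density matrices. -/
def IdentifiableProp {n k : ℕ} (Γ : Mat n → (Fin k → ℝ)) : Prop :=
  ∃ V : (Fin k → ℝ) → Fin k → Mat n,
    ∀ r ∈ Γ '' (Dens n), (∀ i, (V r i).IsHermitian) ∧
      ∀ ρ ∈ Dens n, (Γ ρ = r ↔ ∀ i, hip (V r i) ρ = 0)

/-- `Γ` is `k`-elicitable. -/
def KElicitable {n : ℕ} {R : Type*} (k : ℕ) (Γ : Mat n → R) : Prop :=
  ∃ (Γh : Mat n → (Fin k → ℝ)) (ψ : (Fin k → ℝ) → R),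
    ElicitableProp Γh ∧ IdentifiableProp Γh ∧ ∀ ρ ∈ Dens n, Γ ρ = ψ (Γh ρ)

end

/-! If `τ` has spectrum `μ` and eigenbasis `V`, then its diagonal `q` in the basis `U` is `M μ`
with `M = (|(Uᴴ V)ᵢⱼ|²)` doubly stochastic (Schur). By Birkhoff, `q` is a convex combination of
permutations of `μ`, so `f q ≤ f μ = F τ`. Since `⟨U Diag(d) Uᴴ, τ⟩ = ⟨d, q⟩` and
`F (U Diag(v) Uᴴ) = f v`, the classical subgradient inequality at `q` gives the quantum one at `τ`;
conversely, the quantum inequality tested at `τ = U Diag(p) Uᴴ` is the classical one at `p`. -/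

open Finset

section Majorization

variable {ι : Type*} [Fintype ι]

theorem comp_perm_mem_stdSimplex {x : ι → ℝ} (hx : x ∈ stdSimplex ℝ ι) (σ : Equiv.Perm ι) :
    x ∘ σ ∈ stdSimplex ℝ ι :=
  ⟨fun i => hx.1 (σ i), (Equiv.sum_comp σ x).trans hx.2⟩

variable [DecidableEq ι]

theorem ConvexOn.map_mulVec_le_of_mem_doublyStochastic {f : (ι → ℝ) → ℝ}
    (hperm : ∀ (σ : Equiv.Perm ι) (p : ι → ℝ), f (p ∘ σ) = f p)
    (hconv : ConvexOn ℝ (stdSimplex ℝ ι) f) {M : Matrix ι ι ℝ}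
    (hM : M ∈ doublyStochastic ℝ ι) {x : ι → ℝ} (hx : x ∈ stdSimplex ℝ ι) :
    f (M *ᵥ x) ≤ f x := by
  obtain ⟨w, hw0, hw1, rfl⟩ := exists_eq_sum_perm_of_mem_doublyStochastic hM
  have hmix : (∑ σ, w σ • σ.permMatrix ℝ) *ᵥ x = ∑ σ, w σ • (x ∘ σ) := by
    simp only [Matrix.sum_mulVec, Matrix.smul_mulVec, permMatrix_mulVec]
  calc f ((∑ σ, w σ • σ.permMatrix ℝ) *ᵥ x)
      ≤ ∑ σ, w σ • f (x ∘ σ) := hmix ▸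
        hconv.map_sum_le (fun σ _ => hw0 σ) hw1 (fun σ _ => comp_perm_mem_stdSimplex hx σ)
    _ = f x := by simp only [hperm, ← Finset.sum_smul, hw1, one_smul]

theorem Matrix.normSq_mem_doublyStochastic {U : Matrix ι ι ℂ} (hU : U ∈ unitaryGroup ι ℂ) :
    of (fun i j => Complex.normSq (U i j)) ∈ doublyStochastic ℝ ι := by
  refine mem_doublyStochastic_iff_sum.mpr
    ⟨fun i j => Complex.normSq_nonneg _, fun i => ?_, fun j => ?_⟩
  · have h := congr_fun₂ (mem_unitaryGroup_iff.mp hU) i i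
    simp only [mul_apply, star_apply, Complex.star_def, Complex.mul_conj, one_apply_eq] at h
    exact_mod_cast h
  · have h := congr_fun₂ (mem_unitaryGroup_iff'.mp hU) j j
    simp only [mul_apply, star_apply, Complex.star_def, ← Complex.normSq_eq_conj_mul_self,
      one_apply_eq] at h
    exact_mod_cast h

theorem Matrix.re_diag_conj_diagonal (Q : Matrix ι ι ℂ) (μ : ι → ℝ) :
    (fun i => ((Q * diagonal (fun j => (μ j : ℂ)) * Qᴴ) i i).re)
      = of (fun i j => Complex.normSq (Q i j)) *ᵥ μ := by
  ext i
  rw [mul_apply, Complex.re_sum]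
  simp only [mul_diagonal, conjTranspose_apply, mulVec, dotProduct, of_apply]
  refine Finset.sum_congr rfl fun j _ => ?_
  rw [mul_right_comm, Complex.star_def, Complex.mul_conj, ← Complex.ofReal_mul, Complex.ofReal_re]

end Majorization

section Spectrum

variable {ι : Type*} [Fintype ι]

theorem exists_perm_comp_eq_of_map_eq {α : Type*} [DecidableEq α] {v e : ι → α}
    (h : univ.val.map v = univ.val.map e) : ∃ σ : Equiv.Perm ι, v ∘ σ = e := by
  have hfiber (t : α) : Fintype.card {i // e i = t} = Fintype.card {i // v i = t} := by
    have := congr_arg (Multiset.count t) h.symm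
    simp only [Multiset.count_map, @eq_comm _ t] at this
    simpa [Fintype.card_subtype, Finset.card_def, Finset.filter_val] using this
  exact ⟨Equiv.ofFiberEquiv fun t => Fintype.equivOfCardEq (hfiber t),
    funext (Equiv.ofFiberEquiv_map _)⟩

variable [DecidableEq ι]

theorem Matrix.charpoly_unitary_conj {R : Type*} [CommRing R] [StarRing R] {U : Matrix ι ι R}
    (hU : U ∈ unitaryGroup ι R) (A : Matrix ι ι R) : (U * A * Uᴴ).charpoly = A.charpoly := by
  rw [charpoly_mul_comm, ← Matrix.mul_assoc, ← star_eq_conjTranspose,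
    mem_unitaryGroup_iff'.mp hU, Matrix.one_mul]

theorem Matrix.IsHermitian.exists_perm_eigenvalues_eq {A : Matrix ι ι ℂ} (hA : A.IsHermitian)
    {v : ι → ℝ} (h : A.charpoly = (diagonal fun i => (v i : ℂ)).charpoly) :
    ∃ σ : Equiv.Perm ι, v ∘ σ = hA.eigenvalues := by
  refine exists_perm_comp_eq_of_map_eq (Multiset.map_injective Complex.ofReal_injective ?_)
  have hroots := congr_arg Polynomial.roots h
  rw [hA.roots_charpoly_eq_eigenvalues, charpoly_diagonal, Polynomial.roots_prod _ _
    (prod_ne_zero_iff.mpr fun i _ => Polynomial.X_sub_C_ne_zero _)] at hroots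
  simpa [Multiset.map_map] using hroots.symm

end Spectrum

section SpectralLift

variable {n : ℕ} {U : Mat n}

theorem eigs_eq_comp_perm {A : Mat n} (hA : A.IsHermitian) :
    ∃ σ : Equiv.Perm (Fin n), eigs A = hA.eigenvalues ∘ σ :=
  ⟨Fin.revPerm.trans (Tuple.sort hA.eigenvalues), by ext i; simp [eigs, dif_pos hA]⟩

theorem eigs_unitary_conj_diagonal (hU : U ∈ unitaryGroup (Fin n) ℂ) (v : Fin n → ℝ) :
    ∃ σ : Equiv.Perm (Fin n), eigs (U * diagonal (fun i => (v i : ℂ)) * Uᴴ) = v ∘ σ := by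
  have hA := isHermitian_mul_mul_conjTranspose U
    (isHermitian_diagonal_iff.mpr fun i => Complex.conj_ofReal (v i))
  obtain ⟨σ, hσ⟩ := hA.exists_perm_eigenvalues_eq (charpoly_unitary_conj hU _)
  obtain ⟨π, hπ⟩ := eigs_eq_comp_perm hA
  exact ⟨π.trans σ, by rw [hπ, ← hσ]; rfl⟩

theorem eigenvalues_mem_stdSimplex {τ : Mat n} (hτ : τ ∈ Dens n) :
    hτ.1.1.eigenvalues ∈ stdSimplex ℝ (Fin n) :=
  ⟨hτ.1.eigenvalues_nonneg,
    by simpa using congr_arg Complex.re (hτ.1.1.trace_eq_sum_eigenvalues.symm.trans hτ.2)⟩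

theorem unitary_conj_diagonal_mem_dens (hU : U ∈ unitaryGroup (Fin n) ℂ) {p : Fin n → ℝ}
    (hp : p ∈ stdSimplex ℝ (Fin n)) : U * diagonal (fun i => (p i : ℂ)) * Uᴴ ∈ Dens n := by
  refine ⟨(posSemidef_diagonal_iff.mpr fun i => Complex.zero_le_real.mpr (hp.1 i))
    |>.mul_mul_conjTranspose_same U, ?_⟩
  rw [trace_mul_cycle, ← star_eq_conjTranspose, mem_unitaryGroup_iff'.mp hU, Matrix.one_mul,
    trace_diagonal]
  exact_mod_cast hp.2

def diagInBasis (U τ : Mat n) : Fin n → ℝ := fun i => ((Uᴴ * τ * U) i i).re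

theorem diagInBasis_unitary_conj_diagonal (hU : U ∈ unitaryGroup (Fin n) ℂ) (p : Fin n → ℝ) :
    diagInBasis U (U * diagonal (fun i => (p i : ℂ)) * Uᴴ) = p := by
  have hUU : Uᴴ * U = 1 := mem_unitaryGroup_iff'.mp hU
  ext i
  simp only [diagInBasis, Matrix.mul_assoc, hUU, Matrix.mul_one, ← Matrix.mul_assoc Uᴴ U,
    Matrix.one_mul, diagonal_apply_eq, Complex.ofReal_re]

theorem diagInBasis_mem_stdSimplex (hU : U ∈ unitaryGroup (Fin n) ℂ) {τ : Mat n}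
    (hτ : τ ∈ Dens n) : diagInBasis U τ ∈ stdSimplex ℝ (Fin n) := by
  have hpsd : (Uᴴ * τ * U).PosSemidef := by
    simpa using hτ.1.conjTranspose_mul_mul_same U
  refine ⟨fun i => (Complex.le_def.mp (hpsd.diag_nonneg (i := i))).1, ?_⟩
  have htrace : (Uᴴ * τ * U).trace = 1 := by
    rw [trace_mul_cycle, ← star_eq_conjTranspose, mem_unitaryGroup_iff.mp hU, Matrix.one_mul, hτ.2]
  simpa [diagInBasis, trace, Complex.re_sum] using congr_arg Complex.re htrace

theorem map_diagInBasis_le_map_eigs {f : (Fin n → ℝ) → ℝ}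
    (hperm : ∀ (σ : Equiv.Perm (Fin n)) (p : Fin n → ℝ), f (p ∘ σ) = f p)
    (hconv : ConvexOn ℝ (stdSimplex ℝ (Fin n)) f) (hU : U ∈ unitaryGroup (Fin n) ℂ)
    {τ : Mat n} (hτ : τ ∈ Dens n) : f (diagInBasis U τ) ≤ f (eigs τ) := by
  have hA := hτ.1.1
  set V : Mat n := (hA.eigenvectorUnitary : Mat n)
  have hτV : Uᴴ * τ * U = (Uᴴ * V) * diagonal (fun j => (hA.eigenvalues j : ℂ)) * (Uᴴ * V)ᴴ := by
    conv_lhs => rw [hA.spectral_theorem]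
    simp [V, Unitary.conjStarAlgAut_apply, Matrix.mul_assoc, star_eq_conjTranspose,
      Function.comp_def]
  have hdiag :
      diagInBasis U τ = of (fun i j => Complex.normSq ((Uᴴ * V) i j)) *ᵥ hA.eigenvalues := by
    rw [← re_diag_conj_diagonal, ← hτV]; rfl
  obtain ⟨π, hπ⟩ := eigs_eq_comp_perm hA
  rw [hdiag, hπ, hperm]
  exact hconv.map_mulVec_le_of_mem_doublyStochastic hperm
    (normSq_mem_doublyStochastic (mul_mem (Unitary.star_mem hU) hA.eigenvectorUnitary.2))
    (eigenvalues_mem_stdSimplex hτ)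

theorem hip_sub_right (A B C : Mat n) : hip A (B - C) = hip A B - hip A C := by
  simp [hip, Matrix.mul_sub, trace_sub]

theorem hip_unitary_conj_diagonal (d : Fin n → ℝ) (τ : Mat n) :
    hip (U * diagonal (fun i => (d i : ℂ)) * Uᴴ) τ = ∑ i, d i * diagInBasis U τ i := by
  rw [hip, Matrix.mul_assoc, trace_mul_cycle, trace, Complex.re_sum]
  simp [diagInBasis, mul_diagonal, mul_comm]

end SpectralLift

theorem spectral_subgradients_general {n : ℕ} (f : (Fin n → ℝ) → ℝ)
    (hperm : ∀ (π : Equiv.Perm (Fin n)) (p : Fin n → ℝ), f (p ∘ π) = f p)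
    (hconv : ConvexOn ℝ (stdSimplex ℝ (Fin n)) f)
    (lam : Fin n → ℝ)
    (d : Fin n → ℝ) (U : Mat n) (hU : U ∈ Matrix.unitaryGroup (Fin n) ℂ) :
    IsCSubgrad (stdSimplex ℝ (Fin n)) f lam d ↔
      IsQSubgrad (fun ρ => f (eigs ρ))
        (U * Matrix.diagonal (fun i => (lam i : ℂ)) * Uᴴ)
        (U * Matrix.diagonal (fun i => (d i : ℂ)) * Uᴴ) := by
  have hlift (v : Fin n → ℝ) : f (eigs (U * diagonal (fun i => (v i : ℂ)) * Uᴴ)) = f v := by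
    obtain ⟨σ, hσ⟩ := eigs_unitary_conj_diagonal hU v
    rw [hσ, hperm]
  have hpairing (τ : Mat n) :
      hip (U * diagonal (fun i => (d i : ℂ)) * Uᴴ) (τ - U * diagonal (fun i => (lam i : ℂ)) * Uᴴ)
        = ∑ i, d i * (diagInBasis U τ i - lam i) := by
    simp only [hip_sub_right, hip_unitary_conj_diagonal, diagInBasis_unitary_conj_diagonal hU,
      mul_sub, sum_sub_distrib]
  constructor
  · intro hC τ hτ
    beta_reduce
    rw [hlift, hpairing]
    exact (hC _ (diagInBasis_mem_stdSimplex hU hτ)).trans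
      (map_diagInBasis_le_map_eigs hperm hconv hU hτ)
  · intro hQ p hp
    simpa only [hlift, hpairing, diagInBasis_unitary_conj_diagonal hU] using
      hQ _ (unitary_conj_diagonal_mem_dens hU hp)

/-- subgradients of a permutation-invariant convex function on the
simplex correspond exactly to subgradients of its spectral lift. -/
theorem spectral_subgradients {n : ℕ} (f : (Fin n → ℝ) → ℝ)
    (hperm : ∀ (π : Equiv.Perm (Fin n)) (p : Fin n → ℝ), f (p ∘ π) = f p)
    (hconv : ConvexOn ℝ (stdSimplex ℝ (Fin n)) f)
    (lam : Fin n → ℝ) (hlam : lam ∈ stdSimplex ℝ (Fin n))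
    (d : Fin n → ℝ) (U : Mat n) (hU : U ∈ Matrix.unitaryGroup (Fin n) ℂ) :
    IsCSubgrad (stdSimplex ℝ (Fin n)) f lam d ↔
      IsQSubgrad (fun ρ => f (eigs ρ))
        (U * Matrix.diagonal (fun i => (lam i : ℂ)) * Uᴴ)
        (U * Matrix.diagonal (fun i => (d i : ℂ)) * Uᴴ) :=
  spectral_subgradients_general f hperm hconv lam d U hU
end

section
/- If a quantum score S with report set R elicits a property Γ : Dens(n) → R, then every level set Γ_r = {ρ ∈ Dens(n) : Γ(ρ) = r} is a convex subset of Dens(n). -/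
open Matrix BigOperators ComplexOrder

/-! The expected score `S(r'; ρ)` is linear in `ρ`, so by elicitability the level set `Γ_r` is
`Dens n` cut out by the half-spaces `S(r'; ρ) ≤ S(r; ρ)`, an intersection of convex sets. -/

theorem convex_setOf_forall_le_of_isLinearMap {𝕜 E β ι : Type*} [Semiring 𝕜] [PartialOrder 𝕜]
    [AddCommMonoid E] [Module 𝕜 E] [AddCommGroup β] [PartialOrder β] [IsOrderedAddMonoid β]
    [Module 𝕜 β] [PosSMulMono 𝕜 β] {f : ι → E → β} (hf : ∀ i, IsLinearMap 𝕜 (f i)) (j : ι) :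
    Convex 𝕜 {x | ∀ i, f i x ≤ f j x} := by
  have hsub : ∀ i, IsLinearMap 𝕜 fun x => f i x - f j x := fun i =>
    ((IsLinearMap.mk' _ (hf i)) - IsLinearMap.mk' _ (hf j)).isLinear
  simpa only [Set.ofPred_forall, sub_nonpos] using
    convex_iInter fun i => convex_halfSpace_le (hsub i) 0

theorem convex_dens (n : ℕ) : Convex ℝ (Dens n) := by
  rintro ρ₁ ⟨hpsd₁, htr₁⟩ ρ₂ ⟨hpsd₂, htr₂⟩ a b ha hb hab
  refine ⟨(hpsd₁.smul ha).add (hpsd₂.smul hb), ?_⟩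
  rw [trace_add, trace_smul, trace_smul, htr₁, htr₂, ← add_smul, hab, one_smul]

theorem hip_isLinearMap {n : ℕ} (A : Mat n) : IsLinearMap ℝ (hip A) where
  map_add B C := by simp only [hip, mul_add, trace_add, Complex.add_re]
  map_smul c B := by simp only [hip, mul_smul_comm, trace_smul, Complex.smul_re, smul_eq_mul]

theorem expScoreR_isLinearMap {n : ℕ} {R Y : Type*} [Fintype Y] (s : R → Y → ℝ)
    (μ : R → Y → Mat n) (r : R) : IsLinearMap ℝ (expScoreR s μ r) where
  map_add ρ σ := by
    simp only [expScoreR, (hip_isLinearMap _).map_add, add_mul, Finset.sum_add_distrib]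
  map_smul c ρ := by
    simp only [expScoreR, (hip_isLinearMap _).map_smul, smul_eq_mul, mul_assoc, Finset.mul_sum]

theorem elicitable_level_sets_convex_general {n : ℕ} {R : Type*} {Y : Type*} [Fintype Y]
    (s : R → Y → ℝ) (μ : R → Y → Mat n)
    (Γ : Mat n → R)
    (helicit : ∀ ρ ∈ Dens n, ∀ r : R,
      (∀ r', expScoreR s μ r' ρ ≤ expScoreR s μ r ρ) ↔ r = Γ ρ)
    (r : R) :
    Convex ℝ {ρ | ρ ∈ Dens n ∧ Γ ρ = r} := by
  have hlevel : {ρ | ρ ∈ Dens n ∧ Γ ρ = r}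
      = Dens n ∩ {ρ | ∀ r', expScoreR s μ r' ρ ≤ expScoreR s μ r ρ} := by
    ext ρ
    exact and_congr_right fun hρ => eq_comm.trans (helicit ρ hρ r).symm
  rw [hlevel]
  exact (convex_dens n).inter
    (convex_setOf_forall_le_of_isLinearMap (expScoreR_isLinearMap s μ) r)

/-- level sets of an elicitable quantum property are convex. -/
theorem elicitable_level_sets_convex {n : ℕ} {R : Type*} {Y : Type*} [Fintype Y]
    (s : R → Y → ℝ) (μ : R → Y → Mat n) (hμ : ∀ r, IsPOVM (μ r))
    (Γ : Mat n → R)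
    (helicit : ∀ ρ ∈ Dens n, ∀ r : R,
      (∀ r', expScoreR s μ r' ρ ≤ expScoreR s μ r ρ) ↔ r = Γ ρ)
    (r : R) :
    Convex ℝ {ρ | ρ ∈ Dens n ∧ Γ ρ = r} :=
  elicitable_level_sets_convex_general s μ Γ helicit r
end
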